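/- arXiv:1811.04444 — 3 statements merged into one kernel-verified Lean document; each statement's English description precedes it below -/
import Mathlib

section
/- If two lattices L₁, L₂ ⊂ ℝᵈ are NOT incommensurate (i.e., commensurate), then there exist nonzero reciprocal lattice vectors G₁ ∈ L₁* and G₂ ∈ L₂* such that G₁ + G₂ = 0; equivalently, L₁* ∩ L₂* contains a nonzero vector. -/
/-!
A nonzero translation `τ` of `L₁* ∪ L₂*` lies in that union, because `0` does. If `τ` lies in
both reciprocal lattices it is a nonzero common vector. If it lies only in `L₁*`, then for
`g ∈ L₂*` the point `g + τ` cannot lie in `L₂*` (else `τ` would), so `g ∈ L₁*`; thus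
`L₂* ⊆ L₁*` and `L₁* ∩ L₂* = L₂*`, which is nonzero since `τ ≠ 0` forces `d > 0`.
-/

/-- The reciprocal lattice `{2π A⁻ᵀ n : n ∈ ℤᵈ}` of the Bravais lattice `A ℤᵈ`. -/
def recLat {d : ℕ} (A : Matrix (Fin d) (Fin d) ℝ) : Set (Fin d → ℝ) :=
  {x | ∃ n : Fin d → ℤ, x = (2 * Real.pi) • (A⁻¹).transpose.mulVec (fun i => (n i : ℝ))}

/-- Two lattices `A₁ℤᵈ`, `A₂ℤᵈ` are incommensurate if the only translation preserving the
union of their reciprocal lattices is zero. -/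
def Incommensurate {d : ℕ} (A₁ A₂ : Matrix (Fin d) (Fin d) ℝ) : Prop :=
  ∀ τ : Fin d → ℝ,
    Set.image (fun x => x + τ) (recLat A₁ ∪ recLat A₂) = recLat A₁ ∪ recLat A₂ → τ = 0

namespace AddSubgroup

variable {G : Type*} [AddGroup G] {H K : AddSubgroup G} {τ : G}

lemma le_of_add_mem_union (hτH : τ ∈ H) (hτK : τ ∉ K)
    (hadd : ∀ x ∈ K, x + τ ∈ (H : Set G) ∪ K) : K ≤ H := by
  intro x hx
  rcases hadd x hx with hH | hK
  · simpa using H.sub_mem hH hτH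
  · exact absurd (by simpa using K.add_mem (K.neg_mem hx) hK) hτK

lemma inf_ne_bot_of_add_mem_union (hH : H ≠ ⊥) (hK : K ≠ ⊥) (hτ : τ ≠ 0)
    (hadd : ∀ x ∈ (H : Set G) ∪ K, x + τ ∈ (H : Set G) ∪ K) : H ⊓ K ≠ ⊥ := by
  have hτmem : τ ∈ (H : Set G) ∪ K := by simpa using hadd 0 (Or.inl H.zero_mem)
  by_cases hτH : τ ∈ H <;> by_cases hτK : τ ∈ K
  · exact ne_bot_iff_exists_ne_zero.2 ⟨⟨τ, hτH, hτK⟩, fun h => hτ (congrArg Subtype.val h)⟩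
  · rwa [inf_eq_right.2 (le_of_add_mem_union hτH hτK fun x hx => hadd x (Or.inr hx))]
  · rwa [inf_eq_left.2 (le_of_add_mem_union (H := K) hτK hτH fun x hx =>
      (hadd x (Or.inl hx)).symm)]
  · exact absurd hτmem (by simp [hτH, hτK])

end AddSubgroup

section RecLat

variable {d : ℕ}

noncomputable def recLatHom (A : Matrix (Fin d) (Fin d) ℝ) : (Fin d → ℤ) →+ (Fin d → ℝ) :=
  ((2 * Real.pi) • (A⁻¹).transpose.mulVecLin).toAddMonoidHom.comp
    ((Int.castAddHom ℝ).compLeft (Fin d))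

lemma recLat_eq_range (A : Matrix (Fin d) (Fin d) ℝ) :
    recLat A = (recLatHom A).range := by
  ext x
  exact exists_congr fun n => eq_comm

lemma recLatHom_injective {A : Matrix (Fin d) (Fin d) ℝ} (hA : IsUnit A.det) :
    Function.Injective (recLatHom A) := by
  have hinv : Function.Injective (A⁻¹).transpose.mulVec := by
    refine Matrix.mulVec_injective_iff_isUnit.2 ((Matrix.isUnit_iff_isUnit_det _).2 ?_)
    simpa using Matrix.isUnit_nonsing_inv_det A hA
  have h2π : (2 * Real.pi) ≠ 0 := by positivity
  exact ((smul_right_injective _ h2π).comp hinv).comp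
    (Function.Injective.comp_left Int.cast_injective)

lemma recLatHom_range_ne_bot [NeZero d] {A : Matrix (Fin d) (Fin d) ℝ} (hA : IsUnit A.det) :
    (recLatHom A).range ≠ ⊥ := by
  rw [Ne, AddMonoidHom.range_eq_bot_iff]
  intro h
  have := (injective_iff_map_eq_zero _).1 (recLatHom_injective hA) (Pi.single 0 1)
    (by rw [h]; rfl)
  simpa using congrFun this 0

end RecLat

/-- if two lattices are not incommensurate, then there are nonzero reciprocal
lattice vectors `G₁ ∈ L₁*`, `G₂ ∈ L₂*` with `G₁ + G₂ = 0`; equivalently `L₁* ∩ L₂*`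
contains a nonzero vector. -/
theorem commensurate_gives_nonzero_intersection {d : ℕ}
    (A₁ A₂ : Matrix (Fin d) (Fin d) ℝ) (h₁ : IsUnit A₁.det) (h₂ : IsUnit A₂.det)
    (hcom : ¬ Incommensurate A₁ A₂) :
    (∃ G₁ G₂ : Fin d → ℝ, G₁ ∈ recLat A₁ ∧ G₂ ∈ recLat A₂ ∧ G₁ ≠ 0 ∧ G₂ ≠ 0 ∧
        G₁ + G₂ = 0) ∧
    ∃ G : Fin d → ℝ, G ∈ recLat A₁ ∩ recLat A₂ ∧ G ≠ 0 := by
  simp only [Incommensurate, not_forall] at hcom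
  obtain ⟨τ, hS, hτ⟩ := hcom
  have : NeZero d := ⟨by rintro rfl; exact hτ (Subsingleton.elim _ _)⟩
  have hadd : ∀ x ∈ recLat A₁ ∪ recLat A₂, x + τ ∈ recLat A₁ ∪ recLat A₂ :=
    fun x hx => hS ▸ Set.mem_image_of_mem _ hx
  rw [recLat_eq_range, recLat_eq_range] at hadd ⊢
  obtain ⟨G, hG, hG0⟩ := ((recLatHom A₁).range ⊓ (recLatHom A₂).range).bot_or_exists_ne_zero
    |>.resolve_left (AddSubgroup.inf_ne_bot_of_add_mem_union (recLatHom_range_ne_bot h₁)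
      (recLatHom_range_ne_bot h₂) hτ hadd)
  exact ⟨⟨G, -G, hG.1, neg_mem hG.2, hG0, neg_ne_zero.2 hG0, add_neg_cancel G⟩, G, hG, hG0⟩
end

section
/- Suppose u : ℝᵈ → ℂ is bounded and continuous, V₁(r) = Σ_{m ∈ F₁} V_{1m} e^{iG_{1m}·r} and V₂(r) = Σ_{n ∈ F₂} V_{2n} e^{iG_{2n}·r} are finite trigonometric polynomials, u is smooth with bounded derivatives, and u solves -½Δu + (V₁ + V₂)u = λu. If the averaged Fourier transform û(k) := lim_{R→∞} |B_R|⁻¹ ∫_{B_R} u(r)e^{-ik·r} dr exists for all k ∈ ℝᵈ, then for every k ∈ ℝᵈ: ½|k|² û(k) + Σ_{m ∈ F₁} V_{1m} û(k - G_{1m}) + Σ_{n ∈ F₂} V_{2n} û(k - G_{2n}) = λ û(k). -/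
open MeasureTheory Filter

/-- Plane wave `e^{i k·r}`. -/
noncomputable def planeWave {d : ℕ} (k r : Fin d → ℝ) : ℂ :=
  Complex.exp (Complex.I * ((∑ i, k i * r i : ℝ) : ℂ))

/-- Second derivative of `f` at `x` along the direction `v` (twice). -/
noncomputable def secondDeriv {E : Type*} [NormedAddCommGroup E] [NormedSpace ℝ E]
    (f : E → ℂ) (x v : E) : ℂ :=
  fderiv ℝ (fun y => fderiv ℝ f y v) x v


namespace AFE

open Metric

noncomputable def linF {d : ℕ} (v : Fin d → ℝ) : (Fin d → ℝ) →L[ℝ] ℂ :=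
  ∑ i, v i • (Complex.ofRealCLM.comp (ContinuousLinearMap.proj i))

lemma linF_apply {d : ℕ} (v x : Fin d → ℝ) : linF v x = ((∑ i, v i * x i : ℝ) : ℂ) := by
  simp [linF, ContinuousLinearMap.sum_apply, Complex.ofReal_sum]

lemma linF_single {d : ℕ} (v : Fin d → ℝ) (i : Fin d) :
    linF v (Pi.single i (1:ℝ)) = (v i : ℂ) := by
  rw [linF_apply]
  norm_cast
  rw [Finset.sum_eq_single i (fun j _ hj => by simp [Pi.single_eq_of_ne hj]) (by simp)]
  simp

lemma pw_norm {d : ℕ} (v r : Fin d → ℝ) : ‖planeWave v r‖ = 1 := by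
  rw [planeWave, Complex.norm_exp]
  simp

lemma pw_mul {d : ℕ} (a b r : Fin d → ℝ) :
    planeWave a r * planeWave b r = planeWave (a + b) r := by
  rw [planeWave, planeWave, planeWave, ← Complex.exp_add]
  congr 1
  push_cast [Pi.add_apply, add_mul, Finset.sum_add_distrib]
  ring

lemma contDiff_pw {d : ℕ} (v : Fin d → ℝ) : ContDiff ℝ (⊤ : ℕ∞) (planeWave v) := by
  have : planeWave v = fun r => Complex.exp ((Complex.I • (linF v)) r) := by
    funext r
    simp [planeWave, linF_apply]
  rw [this]
  exact ((Complex.I • (linF v)).contDiff).cexp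

lemma hasFDerivAt_pw {d : ℕ} (v r : Fin d → ℝ) :
    HasFDerivAt (planeWave v) (planeWave v r • (Complex.I • linF v)) r := by
  have h2 : planeWave v = fun x => Complex.exp ((Complex.I • (linF v)) x) := by
    funext x; simp [planeWave, linF_apply]
  rw [h2]
  simpa using ((Complex.I • linF v).hasFDerivAt (x := r)).cexp

lemma pw_deriv_apply {d : ℕ} (v r : Fin d → ℝ) (i : Fin d) :
    (planeWave v r • (Complex.I • linF v)) (Pi.single i (1:ℝ))
      = planeWave v r * (Complex.I * v i) := by
  simp [ContinuousLinearMap.smul_apply, smul_eq_mul, linF_single]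

lemma ball_preimage' {n : ℕ} (i : Fin (n+1)) {R : ℝ} (hR : 0 < R) :
    (MeasurableEquiv.piFinSuccAbove (fun _ => ℝ) i) ⁻¹'
        ((ball (0:ℝ) R) ×ˢ (ball (0 : Fin n → ℝ) R)) = ball (0 : Fin (n+1) → ℝ) R := by
  ext x
  simp only [Set.mem_preimage, Set.mem_prod, mem_ball_zero_iff, MeasurableEquiv.piFinSuccAbove,
    MeasurableEquiv.coe_mk, Equiv.symm, Fin.insertNthEquiv]
  rw [pi_norm_lt_iff hR, pi_norm_lt_iff hR]
  constructor
  · rintro ⟨h1, h2⟩ j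
    rcases eq_or_ne j i with rfl | hj
    · exact h1
    · obtain ⟨m, rfl⟩ := Fin.exists_succAbove_eq hj
      exact h2 m
  · intro h
    exact ⟨h i, fun m => h _⟩

lemma insertNth_line {n : ℕ} (i : Fin (n+1)) (y : Fin n → ℝ) :
    (fun a : ℝ => a • (Pi.single i 1 : Fin (n+1) → ℝ) + i.insertNth (0:ℝ) y)
      = fun a : ℝ => (i.insertNth a y : Fin (n+1) → ℝ) := by
  funext a; ext j
  rcases eq_or_ne j i with rfl | hj
  · simp
  · obtain ⟨m, rfl⟩ := Fin.exists_succAbove_eq hj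
    simp [Pi.single_eq_of_ne (i.succAbove_ne m)]

/-- The averaged integral functional. -/
noncomputable def avgI {d : ℕ} (f : (Fin d → ℝ) → ℂ) (R : ℝ) : ℂ :=
  ((volume (ball (0 : Fin d → ℝ) R)).toReal)⁻¹ •
    ∫ r in ball (0 : Fin d → ℝ) R, f r

/-- Directional derivative along the i-th coordinate. -/
noncomputable def D1 {d : ℕ} (f : (Fin d → ℝ) → ℂ) (i : Fin d) : (Fin d → ℝ) → ℂ :=
  fun r => fderiv ℝ f r (Pi.single i (1:ℝ))

lemma avg_deriv_tendsto_zero {d : ℕ} (g : (Fin d → ℝ) → ℂ) (hg : ContDiff ℝ (⊤ : ℕ∞) g)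
    {C : ℝ} (hC : ∀ x, ‖g x‖ ≤ C) (i : Fin d) :
    Tendsto (avgI (D1 g i)) atTop (nhds 0) := by
  have hC0 : 0 ≤ C := le_trans (norm_nonneg _) (hC 0)
  cases d with
  | zero => exact i.elim0
  | succ n =>
  have hDg : Continuous (D1 g i) :=
    ContDiff.continuous (n := (⊤:ℕ∞)) ((hg.fderiv_right (m := (⊤:ℕ∞)) (by simp)).clm_apply contDiff_const)
  set e := MeasurableEquiv.piFinSuccAbove (fun _ : Fin (n+1) => ℝ) i with he
  have MP := volume_preserving_piFinSuccAbove (fun _ : Fin (n+1) => ℝ) i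
  set G : ℝ × (Fin n → ℝ) → ℂ := fun p => fderiv ℝ g (i.insertNth p.1 p.2) (Pi.single i 1) with hG
  have hGc : Continuous G :=
    hDg.comp (Continuous.finInsertNth (A := fun _ => ℝ) i continuous_fst continuous_snd)
  have hsymm : ∀ p : ℝ × (Fin n → ℝ), e.symm p = i.insertNth p.1 p.2 := by
    intro p; rfl
  have key : ∀ R : ℝ, 0 < R →
      ∫ r in ball (0:Fin (n+1) → ℝ) R, D1 g i r
        = ∫ y in ball (0:Fin n → ℝ) R,
            (g (i.insertNth R y) - g (i.insertNth (-R) y)) := by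
    intro R hR
    have hGint : IntegrableOn G ((ball (0:ℝ) R) ×ˢ (ball (0:Fin n → ℝ) R)) volume := by
      apply (hGc.continuousOn.integrableOn_compact
        ((isCompact_closedBall (0:ℝ) R).prod (isCompact_closedBall (0:Fin n → ℝ) R))).mono_set
      exact Set.prod_mono ball_subset_closedBall ball_subset_closedBall
    have step1 : ∫ r in ball (0:Fin (n+1) → ℝ) R, D1 g i r
        = ∫ p in (ball (0:ℝ) R) ×ˢ (ball (0:Fin n → ℝ) R), G p := by
      rw [← ball_preimage' i hR]
      rw [← MP.setIntegral_preimage_emb e.measurableEmbedding G _]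
      congr 1 with r
      have hre : e.symm (e r) = r := e.symm_apply_apply r
      rw [hG, D1]
      simp only [← hsymm, hre]
      exact congrArg (fun z => (fderiv ℝ g z) (Pi.single i 1)) hre.symm
    rw [step1, Measure.volume_eq_prod, setIntegral_prod G (by rwa [← Measure.volume_eq_prod])]
    have swap : ∫ a in ball (0:ℝ) R, ∫ y in ball (0:Fin n → ℝ) R, G (a, y)
        = ∫ y in ball (0:Fin n → ℝ) R, ∫ a in ball (0:ℝ) R, G (a, y) := by
      apply integral_integral_swap
      rw [Measure.prod_restrict]
      exact hGint.congr_fun (fun p _ => rfl) (measurableSet_ball.prod measurableSet_ball)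
    rw [swap]
    apply integral_congr_ae (Eventually.of_forall fun y => ?_)
    have hle : -R ≤ R := by linarith
    have hderiv : ∀ a : ℝ, HasDerivAt (fun a : ℝ => g (i.insertNth a y)) (G (a, y)) a := by
      intro a
      have h1 : HasDerivAt (fun a : ℝ => a • (Pi.single i 1 : Fin (n+1) → ℝ) + i.insertNth (0:ℝ) y)
          (Pi.single i 1) a := by
        simpa using ((hasDerivAt_id a).smul_const (Pi.single i 1 : Fin (n+1) → ℝ)).add_const
          (i.insertNth (0:ℝ) y)
      rw [insertNth_line] at h1
      exact (hg.differentiable (by simp) (i.insertNth a y)).hasFDerivAt.comp_hasDerivAt a h1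
    rw [Real.ball_eq_Ioo, zero_sub, zero_add, ← integral_Ioc_eq_integral_Ioo,
      ← intervalIntegral.integral_of_le hle]
    exact intervalIntegral.integral_eq_sub_of_hasDerivAt (fun a _ => hderiv a)
      ((hGc.comp (continuous_id.prodMk continuous_const)).intervalIntegrable _ _)
  have bound : ∀ᶠ R : ℝ in atTop, ‖avgI (D1 g i) R‖ ≤ C / R := by
    filter_upwards [eventually_gt_atTop (0:ℝ)] with R hR
    have h2R : (0:ℝ) < 2 * R := by linarith
    have hvt : (volume (ball (0:Fin n → ℝ) R)).toReal = (2*R)^n := by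
      rw [volume_pi_ball _ hR]
      simp [Real.volume_ball, ← ENNReal.ofReal_pow h2R.le]
      rw [ENNReal.toReal_ofReal hR.le]
    have hvB : (volume (ball (0:Fin (n+1) → ℝ) R)).toReal = (2*R)^(n+1) := by
      rw [volume_pi_ball _ hR]
      simp [Real.volume_ball, ← ENNReal.ofReal_pow h2R.le]
      rw [ENNReal.toReal_ofReal hR.le]
    have hnorm : ‖∫ y in ball (0:Fin n → ℝ) R,
        (g (i.insertNth R y) - g (i.insertNth (-R) y))‖ ≤ (2*C) * (2*R)^n := by
      rw [← hvt]
      apply norm_setIntegral_le_of_norm_le_const measure_ball_lt_top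
      · intro y _
        calc ‖g (i.insertNth R y) - g (i.insertNth (-R) y)‖
            ≤ ‖g (i.insertNth R y)‖ + ‖g (i.insertNth (-R) y)‖ := norm_sub_le _ _
          _ ≤ 2 * C := by
              have := hC (i.insertNth R y); have := hC (i.insertNth (-R) y); linarith
    rw [avgI, key R hR, hvB, norm_smul]
    have hpow : (0:ℝ) < (2*R)^(n+1) := pow_pos h2R _
    rw [Real.norm_eq_abs, abs_of_nonneg (inv_nonneg.2 hpow.le)]
    calc ((2*R)^(n+1))⁻¹ * ‖_‖ ≤ ((2*R)^(n+1))⁻¹ * ((2*C) * (2*R)^n) :=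
          mul_le_mul_of_nonneg_left hnorm (inv_nonneg.2 hpow.le)
      _ = C / R := by
          rw [pow_succ]
          field_simp
  exact squeeze_zero_norm' bound (tendsto_const_nhds.div_atTop tendsto_id)

lemma intOn {d : ℕ} {f : (Fin d → ℝ) → ℂ} (hf : Continuous f) (R : ℝ) :
    IntegrableOn f (ball (0 : Fin d → ℝ) R) volume :=
  (hf.continuousOn.integrableOn_compact (isCompact_closedBall _ _)).mono_set
    ball_subset_closedBall

lemma smul_mul_comm' (c : ℝ) (z X : ℂ) : c • (z * X) = z * (c • X) := by
  simp only [Complex.real_smul]; ring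

lemma avgI_const_mul {d : ℕ} (c : ℂ) (f : (Fin d → ℝ) → ℂ) (R : ℝ) :
    avgI (fun r => c * f r) R = c * avgI f R := by
  rw [avgI, avgI, ← smul_mul_comm']
  congr 1
  simpa using integral_smul c f (μ := volume.restrict (ball (0: Fin d → ℝ) R))

end AFE


namespace AFE
open Metric

lemma avgI_add {d : ℕ} {f g : (Fin d → ℝ) → ℂ} (R : ℝ)
    (hf : IntegrableOn f (ball (0:Fin d → ℝ) R) volume)
    (hg : IntegrableOn g (ball (0:Fin d → ℝ) R) volume) :
    avgI (fun r => f r + g r) R = avgI f R + avgI g R := by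
  rw [avgI, avgI, avgI, ← smul_add]
  congr 1
  exact integral_add hf hg

lemma avgI_sub {d : ℕ} {f g : (Fin d → ℝ) → ℂ} (R : ℝ)
    (hf : IntegrableOn f (ball (0:Fin d → ℝ) R) volume)
    (hg : IntegrableOn g (ball (0:Fin d → ℝ) R) volume) :
    avgI (fun r => f r - g r) R = avgI f R - avgI g R := by
  rw [avgI, avgI, avgI, ← smul_sub]
  congr 1
  exact integral_sub hf hg

lemma avgI_sum {d : ℕ} {ι : Type*} (s : Finset ι) (f : ι → (Fin d → ℝ) → ℂ) (R : ℝ)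
    (hf : ∀ j ∈ s, IntegrableOn (f j) (ball (0:Fin d → ℝ) R) volume) :
    avgI (fun r => ∑ j ∈ s, f j r) R = ∑ j ∈ s, avgI (f j) R := by
  rw [avgI, integral_finset_sum s hf, Finset.smul_sum]
  rfl

end AFE


namespace AFE
open Metric

/-- `u` multiplied by the plane wave `e^{-ik·r}`. -/
noncomputable def Wf {d : ℕ} (u : (Fin d → ℝ) → ℂ) (k : Fin d → ℝ) : (Fin d → ℝ) → ℂ :=
  fun r => u r * planeWave (-k) r

end AFE

set_option maxHeartbeats 2000000 in
/-- passing the eigenvalue equation through the averaged Fourier transform: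
if `u` is a bounded smooth solution with bounded derivatives of
`-½Δu + (V₁ + V₂)u = λu` with trigonometric polynomial potentials, and the averaged Fourier
transform `û(k)` exists for all `k`, then
`½|k|² û(k) + Σ_m V_{1m} û(k - G_{1m}) + Σ_n V_{2n} û(k - G_{2n}) = λ û(k)`. -/
theorem averaged_fourier_of_eigenfunction {d : ℕ}
    (A₁ A₂ : Matrix (Fin d) (Fin d) ℝ) (h₁ : IsUnit A₁.det) (h₂ : IsUnit A₂.det)
    (G₁ G₂ : (Fin d → ℤ) → (Fin d → ℝ))
    (hG₁ : ∀ m, G₁ m = (2 * Real.pi) • (A₁⁻¹).transpose.mulVec (fun i => (m i : ℝ)))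
    (hG₂ : ∀ n, G₂ n = (2 * Real.pi) • (A₂⁻¹).transpose.mulVec (fun i => (n i : ℝ)))
    (F₁ F₂ : Finset (Fin d → ℤ))
    (V₁c V₂c : (Fin d → ℤ) → ℂ) (lam : ℂ)
    (u : (Fin d → ℝ) → ℂ) (uhat : (Fin d → ℝ) → ℂ)
    (hu_smooth : ContDiff ℝ (⊤ : ℕ∞) u)
    (hu_bdd : ∀ n : ℕ, ∃ C : ℝ, ∀ x, ‖iteratedFDeriv ℝ n u x‖ ≤ C)
    (heq : ∀ r : Fin d → ℝ,
      -(1/2 : ℂ) * ∑ i : Fin d, secondDeriv u r (Pi.single i (1:ℝ))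
        + ((∑ m ∈ F₁, V₁c m * planeWave (G₁ m) r)
            + ∑ n ∈ F₂, V₂c n * planeWave (G₂ n) r) * u r = lam * u r)
    (hhat : ∀ k : Fin d → ℝ,
      Tendsto
        (fun R : ℝ =>
          ((volume (Metric.ball (0 : Fin d → ℝ) R)).toReal)⁻¹ •
            ∫ r in Metric.ball (0 : Fin d → ℝ) R, u r * planeWave (-k) r)
        atTop (nhds (uhat k))) :
    ∀ k : Fin d → ℝ,
      (1/2 : ℂ) * ((∑ i, k i ^ 2 : ℝ) : ℂ) * uhat k
        + ∑ m ∈ F₁, V₁c m * uhat (k - G₁ m)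
        + ∑ n ∈ F₂, V₂c n * uhat (k - G₂ n) = lam * uhat k := by
  intro k
  classical
  obtain ⟨C₀, hC₀'⟩ := hu_bdd 0
  obtain ⟨C₁, hC₁'⟩ := hu_bdd 1
  have hC₀ : ∀ x, ‖u x‖ ≤ C₀ := fun x => by
    simpa [norm_iteratedFDeriv_zero] using hC₀' x
  have hDu_bdd : ∀ (i : Fin d) x, ‖AFE.D1 u i x‖ ≤ C₁ := by
    intro i x
    have h1 : AFE.D1 u i x = iteratedFDeriv ℝ 1 u x (fun _ => Pi.single i (1:ℝ)) := by
      rw [iteratedFDeriv_one_apply]; rfl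
    rw [h1]
    have h2 := (iteratedFDeriv ℝ 1 u x).le_opNorm (fun _ => Pi.single i (1:ℝ))
    simp only [Pi.norm_single, norm_one, Finset.prod_const, one_pow, mul_one,
      Finset.card_univ, Fintype.card_fin] at h2
    exact h2.trans (hC₁' x)
  have hu_diff : Differentiable ℝ u := hu_smooth.differentiable (by simp)
  have hp' : ∀ r, HasFDerivAt (planeWave (-k))
      (planeWave (-k) r • (Complex.I • AFE.linF (-k))) r := AFE.hasFDerivAt_pw (-k)
  have hw' : ∀ r, HasFDerivAt (AFE.Wf u k)
      (u r • (planeWave (-k) r • (Complex.I • AFE.linF (-k)))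
        + planeWave (-k) r • fderiv ℝ u r) r :=
    fun r => ((hu_diff r).hasFDerivAt).mul (hp' r)
  have hw_smooth : ContDiff ℝ (⊤ : ℕ∞) (AFE.Wf u k) := hu_smooth.mul (AFE.contDiff_pw (-k))
  have hDu_smooth : ∀ i, ContDiff ℝ (⊤ : ℕ∞) (AFE.D1 u i) := fun i =>
    ContDiff.clm_apply (hu_smooth.fderiv_right (m := (⊤ : ℕ∞)) (by simp)) contDiff_const
  have hw1_smooth : ∀ i, ContDiff ℝ (⊤ : ℕ∞) (AFE.D1 (AFE.Wf u k) i) := fun i =>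
    ContDiff.clm_apply (hw_smooth.fderiv_right (m := (⊤ : ℕ∞)) (by simp)) contDiff_const
  have E1 : ∀ (i : Fin d) r, AFE.D1 (AFE.Wf u k) i r
      = Complex.I * (((-k) i : ℝ) : ℂ) * AFE.Wf u k r
        + planeWave (-k) r * AFE.D1 u i r := by
    intro i r
    rw [AFE.D1, (hw' r).fderiv]
    simp only [ContinuousLinearMap.add_apply, ContinuousLinearMap.smul_apply, smul_eq_mul,
      AFE.linF_single, AFE.Wf, AFE.D1]
    ring
  have hni : ∀ (i : Fin d) r, HasFDerivAt
      (fun r => Complex.I * (((-k) i : ℝ) : ℂ) * AFE.Wf u k r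
        + planeWave (-k) r * AFE.D1 u i r)
      ((Complex.I * (((-k) i : ℝ) : ℂ)) • (fderiv ℝ (AFE.Wf u k) r)
        + (planeWave (-k) r • fderiv ℝ (AFE.D1 u i) r
            + AFE.D1 u i r • (planeWave (-k) r • (Complex.I • AFE.linF (-k))))) r := by
    intro i r
    exact ((((hw_smooth.differentiable (by simp)) r).hasFDerivAt.const_mul _).add
      ((hp' r).mul (((hDu_smooth i).differentiable (by simp) r).hasFDerivAt)))
  have E2 : ∀ (i : Fin d) r, AFE.D1 (AFE.D1 (AFE.Wf u k) i) i r
      = Complex.I * (((-k) i : ℝ) : ℂ) * AFE.D1 (AFE.Wf u k) i r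
        + (planeWave (-k) r * secondDeriv u r (Pi.single i (1:ℝ))
            + AFE.D1 u i r * (planeWave (-k) r * (Complex.I * (((-k) i : ℝ) : ℂ)))) := by
    intro i r
    have hfun : AFE.D1 (AFE.Wf u k) i
        = fun r => Complex.I * (((-k) i : ℝ) : ℂ) * AFE.Wf u k r
            + planeWave (-k) r * AFE.D1 u i r := funext (E1 i)
    conv_lhs => rw [AFE.D1, hfun]
    rw [(hni i r).fderiv]
    simp only [ContinuousLinearMap.add_apply, ContinuousLinearMap.smul_apply, smul_eq_mul,
      AFE.linF_single, AFE.D1, secondDeriv]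
    rw [show AFE.D1 u i = fun y => fderiv ℝ u y (Pi.single i (1:ℝ)) from rfl]
  have I1 : ∀ (i : Fin d) r, secondDeriv u r (Pi.single i (1:ℝ)) * planeWave (-k) r
      = AFE.D1 (AFE.D1 (AFE.Wf u k) i) i r
        - 2 * (Complex.I * (((-k) i : ℝ) : ℂ)) * AFE.D1 (AFE.Wf u k) i r
        + (Complex.I * (((-k) i : ℝ) : ℂ))^2 * AFE.Wf u k r := by
    intro i r
    rw [E2 i r, E1 i r]
    ring
  have hW_bdd : ∀ r, ‖AFE.Wf u k r‖ ≤ C₀ := by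
    intro r
    show ‖u r * planeWave (-k) r‖ ≤ C₀
    rw [norm_mul, AFE.pw_norm, mul_one]
    exact hC₀ r
  have hW1_bdd : ∀ (i : Fin d) r, ‖AFE.D1 (AFE.Wf u k) i r‖ ≤ |k i| * C₀ + C₁ := by
    intro i r
    rw [E1 i r]
    have ha : ‖Complex.I * (((-k) i : ℝ) : ℂ)‖ = |k i| := by
      rw [norm_mul]
      simp [Pi.neg_apply, abs_neg]
    calc ‖Complex.I * (((-k) i : ℝ) : ℂ) * AFE.Wf u k r
          + planeWave (-k) r * AFE.D1 u i r‖
        ≤ ‖Complex.I * (((-k) i : ℝ) : ℂ) * AFE.Wf u k r‖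
          + ‖planeWave (-k) r * AFE.D1 u i r‖ := norm_add_le _ _
      _ ≤ |k i| * C₀ + C₁ := by
          rw [norm_mul, ha, norm_mul, AFE.pw_norm, one_mul]
          exact add_le_add (mul_le_mul_of_nonneg_left (hW_bdd r) (abs_nonneg _)) (hDu_bdd i r)
  -- continuity
  have cont_W : Continuous (AFE.Wf u k) := hw_smooth.continuous
  have cont_W1 : ∀ i, Continuous (AFE.D1 (AFE.Wf u k) i) := fun i => (hw1_smooth i).continuous
  have cont_W2 : ∀ i, Continuous (AFE.D1 (AFE.D1 (AFE.Wf u k) i) i) := fun i =>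
    ContDiff.continuous (n := (⊤:ℕ∞))
      (ContDiff.clm_apply ((hw1_smooth i).fderiv_right (m := (⊤:ℕ∞)) (by simp)) contDiff_const)
  have cont_Wg : ∀ v : Fin d → ℝ, Continuous (AFE.Wf u v) := fun v =>
    hu_smooth.continuous.mul (AFE.contDiff_pw (-v)).continuous
  -- tendsto facts
  have T1 : ∀ i, Tendsto (AFE.avgI (AFE.D1 (AFE.Wf u k) i)) atTop (nhds 0) :=
    fun i => AFE.avg_deriv_tendsto_zero _ hw_smooth hW_bdd i
  have T2 : ∀ i, Tendsto (AFE.avgI (AFE.D1 (AFE.D1 (AFE.Wf u k) i) i)) atTop (nhds 0) :=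
    fun i => AFE.avg_deriv_tendsto_zero _ (hw1_smooth i) (hW1_bdd i) i
  have TW : ∀ v : Fin d → ℝ, Tendsto (AFE.avgI (AFE.Wf u v)) atTop (nhds (uhat v)) :=
    fun v => hhat v
  -- the integrand
  set Φ : (Fin d → ℝ) → ℂ := fun r =>
    (-(1/2 : ℂ) * ∑ i : Fin d, secondDeriv u r (Pi.single i (1:ℝ))
        + ((∑ m ∈ F₁, V₁c m * planeWave (G₁ m) r)
            + ∑ n ∈ F₂, V₂c n * planeWave (G₂ n) r) * u r) * planeWave (-k) r with hΦ
  have ΦA : Φ = fun r => lam * AFE.Wf u k r := by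
    funext r
    rw [hΦ]
    show (-(1/2 : ℂ) * ∑ i : Fin d, secondDeriv u r (Pi.single i (1:ℝ))
        + ((∑ m ∈ F₁, V₁c m * planeWave (G₁ m) r)
            + ∑ n ∈ F₂, V₂c n * planeWave (G₂ n) r) * u r) * planeWave (-k) r
      = lam * AFE.Wf u k r
    rw [heq r]
    show lam * u r * planeWave (-k) r = lam * (u r * planeWave (-k) r)
    ring
  have hg : ∀ (G : Fin d → ℝ) (r : Fin d → ℝ),
      AFE.Wf u (k - G) r = planeWave G r * (u r * planeWave (-k) r) := by
    intro G r
    show u r * planeWave (-(k - G)) r = _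
    have hGk : (-(k - G)) = G + -k := by rw [neg_sub, sub_eq_add_neg]
    rw [hGk, ← AFE.pw_mul G (-k) r]
    ring
  have ΦB : Φ = fun r =>
      (∑ i : Fin d, (-(1/2:ℂ)) * (AFE.D1 (AFE.D1 (AFE.Wf u k) i) i r
          - 2 * (Complex.I * (((-k) i : ℝ) : ℂ)) * AFE.D1 (AFE.Wf u k) i r
          + (Complex.I * (((-k) i : ℝ) : ℂ))^2 * AFE.Wf u k r))
        + ((∑ m ∈ F₁, V₁c m * AFE.Wf u (k - G₁ m) r)
            + ∑ n ∈ F₂, V₂c n * AFE.Wf u (k - G₂ n) r) := by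
    funext r
    rw [hΦ]
    simp only [← I1, hg]
    show (-(1/2 : ℂ) * ∑ i : Fin d, secondDeriv u r (Pi.single i (1:ℝ))
        + ((∑ m ∈ F₁, V₁c m * planeWave (G₁ m) r)
            + ∑ n ∈ F₂, V₂c n * planeWave (G₂ n) r) * u r) * planeWave (-k) r
      = (∑ i : Fin d, (-(1/2:ℂ)) * (secondDeriv u r (Pi.single i (1:ℝ)) * planeWave (-k) r))
        + ((∑ m ∈ F₁, V₁c m * (planeWave (G₁ m) r * (u r * planeWave (-k) r)))
            + ∑ n ∈ F₂, V₂c n * (planeWave (G₂ n) r * (u r * planeWave (-k) r)))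
    rw [add_mul, mul_assoc, Finset.sum_mul, Finset.mul_sum]
    congr 1
    rw [add_mul, add_mul, Finset.sum_mul, Finset.sum_mul, Finset.sum_mul, Finset.sum_mul]
    congr 1
    · exact Finset.sum_congr rfl fun m _ => by ring
    · exact Finset.sum_congr rfl fun n _ => by ring
  -- limit computed via eigen-equation
  have TA : Tendsto (AFE.avgI Φ) atTop (nhds (lam * uhat k)) := by
    have h : AFE.avgI Φ = fun R => lam * AFE.avgI (AFE.Wf u k) R := by
      funext R
      rw [ΦA]
      exact AFE.avgI_const_mul lam _ R
    rw [h]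
    exact (TW k).const_mul lam
  -- limit computed via the decomposition
  have havg : ∀ R : ℝ, AFE.avgI Φ R
      = (∑ i : Fin d, (-(1/2:ℂ)) * (AFE.avgI (AFE.D1 (AFE.D1 (AFE.Wf u k) i) i) R
          - 2 * (Complex.I * (((-k) i : ℝ) : ℂ)) * AFE.avgI (AFE.D1 (AFE.Wf u k) i) R
          + (Complex.I * (((-k) i : ℝ) : ℂ))^2 * AFE.avgI (AFE.Wf u k) R))
        + ((∑ m ∈ F₁, V₁c m * AFE.avgI (AFE.Wf u (k - G₁ m)) R)
            + ∑ n ∈ F₂, V₂c n * AFE.avgI (AFE.Wf u (k - G₂ n)) R) := by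
    intro R
    rw [ΦB]
    have contin : ∀ i : Fin d, Continuous (fun r => (-(1/2:ℂ)) *
        (AFE.D1 (AFE.D1 (AFE.Wf u k) i) i r
          - 2 * (Complex.I * (((-k) i : ℝ) : ℂ)) * AFE.D1 (AFE.Wf u k) i r
          + (Complex.I * (((-k) i : ℝ) : ℂ))^2 * AFE.Wf u k r)) := fun i =>
      continuous_const.mul (((cont_W2 i).sub (continuous_const.mul (cont_W1 i))).add
        (continuous_const.mul cont_W))
    rw [AFE.avgI_add R
      (AFE.intOn (continuous_finset_sum _ fun i _ => contin i) R)
      (AFE.intOn (f := fun r => ∑ m ∈ F₁, V₁c m * AFE.Wf u (k - G₁ m) r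
          + ∑ n ∈ F₂, V₂c n * AFE.Wf u (k - G₂ n) r)
        ((continuous_finset_sum _ fun m _ => continuous_const.mul (cont_Wg _)).add
        (continuous_finset_sum _ fun n _ => continuous_const.mul (cont_Wg _))) R)]
    congr 1
    · rw [AFE.avgI_sum Finset.univ _ R (fun i _ => AFE.intOn (contin i) R)]
      refine Finset.sum_congr rfl fun i _ => ?_
      rw [AFE.avgI_const_mul]
      congr 1
      rw [AFE.avgI_add (f := fun r => AFE.D1 (AFE.D1 (AFE.Wf u k) i) i r
            - 2 * (Complex.I * (((-k) i : ℝ) : ℂ)) * AFE.D1 (AFE.Wf u k) i r)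
          (g := fun r => (Complex.I * (((-k) i : ℝ) : ℂ))^2 * AFE.Wf u k r) R
        (AFE.intOn ((cont_W2 i).sub (continuous_const.mul (cont_W1 i))) R)
        (AFE.intOn (continuous_const.mul cont_W) R),
        AFE.avgI_sub (g := fun r => 2 * (Complex.I * (((-k) i : ℝ) : ℂ)) * AFE.D1 (AFE.Wf u k) i r)
          R (AFE.intOn (cont_W2 i) R) (AFE.intOn (continuous_const.mul (cont_W1 i)) R),
        AFE.avgI_const_mul, AFE.avgI_const_mul]
    · rw [AFE.avgI_add R
        (AFE.intOn (f := fun r => ∑ m ∈ F₁, V₁c m * AFE.Wf u (k - G₁ m) r)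
          (continuous_finset_sum _ fun m _ => continuous_const.mul (cont_Wg _)) R)
        (AFE.intOn (f := fun r => ∑ n ∈ F₂, V₂c n * AFE.Wf u (k - G₂ n) r)
          (continuous_finset_sum _ fun n _ => continuous_const.mul (cont_Wg _)) R),
        AFE.avgI_sum F₁ (fun m r => V₁c m * AFE.Wf u (k - G₁ m) r) R (fun m _ => AFE.intOn (continuous_const.mul (cont_Wg _)) R),
        AFE.avgI_sum F₂ (fun n r => V₂c n * AFE.Wf u (k - G₂ n) r) R (fun n _ => AFE.intOn (continuous_const.mul (cont_Wg _)) R)]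
      congr 1
      · exact Finset.sum_congr rfl fun m _ => AFE.avgI_const_mul _ _ R
      · exact Finset.sum_congr rfl fun n _ => AFE.avgI_const_mul _ _ R
  have TB : Tendsto (AFE.avgI Φ) atTop (nhds
      ((∑ i : Fin d, (-(1/2:ℂ)) * ((0:ℂ)
          - 2 * (Complex.I * (((-k) i : ℝ) : ℂ)) * (0:ℂ)
          + (Complex.I * (((-k) i : ℝ) : ℂ))^2 * uhat k))
        + ((∑ m ∈ F₁, V₁c m * uhat (k - G₁ m))
            + ∑ n ∈ F₂, V₂c n * uhat (k - G₂ n)))) := by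
    rw [show AFE.avgI Φ = _ from funext havg]
    refine Tendsto.add (tendsto_finset_sum _ fun i _ => ?_) (Tendsto.add
      (tendsto_finset_sum _ fun m _ => (TW (k - G₁ m)).const_mul (V₁c m))
      (tendsto_finset_sum _ fun n _ => (TW (k - G₂ n)).const_mul (V₂c n)))
    exact (((T2 i).sub ((T1 i).const_mul
      (2 * (Complex.I * (((-k) i : ℝ) : ℂ))))).add
      ((TW k).const_mul ((Complex.I * (((-k) i : ℝ) : ℂ))^2))).const_mul (-(1/2:ℂ))
  have huniq := tendsto_nhds_unique TB TA
  rw [← huniq, add_assoc]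
  congr 1
  · push_cast
    rw [mul_assoc, Finset.sum_mul, Finset.mul_sum]
    refine Finset.sum_congr rfl fun i _ => ?_
    simp only [Pi.neg_apply, Complex.ofReal_neg]
    linear_combination ((1/2) * ((k i : ℝ) : ℂ)^2 * uhat k) * Complex.I_sq
end

section
/- Let L₁, L₂ ⊂ ℝᵈ be incommensurate lattices with unit cells Γ₁, Γ₂ and let the wavevector set W_E = {G_{1m} + G_{2n} : |G_{1m}|² + |G_{2n}|² ≤ 2E} be generated by an energy cutoff E > 0. Then W_E is finite, and if N₁(E) denotes the number of elements of W_E lying in the reciprocal unit cell Γ₁* and N₂(E) the number lying in Γ₂*, then N₁(E)/N₂(E) → |Γ₁*|/|Γ₂*| = |Γ₂|/|Γ₁| as E → ∞. -/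
open Filter

/-- The reciprocal lattice vector `G_m = 2π A⁻ᵀ m`. -/
noncomputable def Gvec {d : ℕ} (A : Matrix (Fin d) (Fin d) ℝ) (m : Fin d → ℤ) :
    Fin d → ℝ :=
  (2 * Real.pi) • (A⁻¹).transpose.mulVec (fun i => (m i : ℝ))

/-- Squared Euclidean norm on `Fin d → ℝ`. -/
def sqNorm {d : ℕ} (v : Fin d → ℝ) : ℝ := ∑ i, v i ^ 2

/-- The reciprocal unit cell `Γ* = 2π A⁻ᵀ [0,1)ᵈ`. -/
def recUnitCell {d : ℕ} (A : Matrix (Fin d) (Fin d) ℝ) : Set (Fin d → ℝ) :=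
  {x | ∃ α : Fin d → ℝ, (∀ i, α i ∈ Set.Ico (0:ℝ) 1) ∧
    x = (2 * Real.pi) • (A⁻¹).transpose.mulVec α}

/-- The wavevector set generated by an energy cutoff `E`. -/
def cutoffSet {d : ℕ} (A₁ A₂ : Matrix (Fin d) (Fin d) ℝ) (E : ℝ) : Set (Fin d → ℝ) :=
  {x | ∃ m n : Fin d → ℤ, x = Gvec A₁ m + Gvec A₂ n ∧
    sqNorm (Gvec A₁ m) + sqNorm (Gvec A₂ n) ≤ 2 * E}

/-!
Reducing `G₁ₘ + G₂ₙ` modulo the first lattice shows that the wavevectors of the cutoff set lying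
in `Γ₁*` are indexed by the `n` alone (injectively, by incommensurability), and since the reduced
vector has norm at most a constant `C`, these `n` are squeezed between the lattice-point sets
`|G₂ₙ| ≤ √E ∓ C`. Lattice-point counting in dilated ellipsoids then gives
`N₁(E) ~ vol {x : |2π A₂⁻ᵀ x| ≤ 1} · E^{d/2} = |det A₂| (2π)⁻ᵈ |B| E^{d/2}`, with `B` the
Euclidean unit ball, and symmetrically for `N₂(E)`.
-/

open Topology MeasureTheory Metric Bornology Pointwise WithLp

section LatticeCount

variable {ι V : Type*} [NormedAddCommGroup V] [NormedSpace ℝ V]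

def latticePoint (f : (ι → ℝ) ≃L[ℝ] V) (n : ι → ℤ) : V := f (Int.cast ∘ n)

lemma latticePoint_sub (f : (ι → ℝ) ≃L[ℝ] V) (m n : ι → ℤ) :
    latticePoint f (m - n) = latticePoint f m - latticePoint f n := by
  rw [latticePoint, latticePoint, latticePoint, ← map_sub]
  congr 1
  ext i
  simp

lemma latticePoint_injective (f : (ι → ℝ) ≃L[ℝ] V) : Function.Injective (latticePoint f) :=
  f.injective.comp (Int.cast_injective (α := ℝ)).comp_left

def latticeBall (f : (ι → ℝ) ≃L[ℝ] V) (r : ℝ) : Set (ι → ℤ) :=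
  {n | ‖latticePoint f n‖ ≤ r}

lemma preimage_closedBall_eq_smul (f : (ι → ℝ) ≃L[ℝ] V) {r : ℝ} (hr : 0 < r) :
    f ⁻¹' closedBall 0 r = r • f ⁻¹' closedBall 0 1 := by
  ext x
  simp [Set.mem_smul_set_iff_inv_smul_mem₀ hr.ne', norm_smul, abs_of_pos hr, inv_mul_le_iff₀ hr]

variable [Fintype ι] (f : (ι → ℝ) ≃L[ℝ] V)

lemma mem_span_basisFun_iff {v : ι → ℝ} :
    v ∈ Submodule.span ℤ (Set.range (Pi.basisFun ℝ ι)) ↔ ∃ n : ι → ℤ, Int.cast ∘ n = v := by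
  simp only [(Pi.basisFun ℝ ι).mem_span_iff_repr_mem ℤ, Pi.basisFun_repr, Set.mem_range,
    algebraMap_int_eq, eq_intCast, funext_iff, Function.comp_apply, Classical.skolem]

lemma isBounded_preimage_closedBall (r : ℝ) : IsBounded (f ⁻¹' closedBall 0 r) := by
  rw [← f.image_symm_eq_preimage]
  exact (f.symm : V →L[ℝ] ι → ℝ).lipschitz.isBounded_image isBounded_closedBall

lemma latticeBall_finite (r : ℝ) : (latticeBall f r).Finite := by
  refine ((ZSpan.setFinite_inter (Pi.basisFun ℝ ι) (isBounded_preimage_closedBall f r)).preimage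
    (Int.cast_injective (α := ℝ)).comp_left.injOn).subset fun n hn => ?_
  exact ⟨by simpa [latticeBall, latticePoint] using hn, mem_span_basisFun_iff.2 ⟨n, rfl⟩⟩

lemma preimage_closedBall_inter_smul_span {r : ℝ} (hr : 0 < r) :
    f ⁻¹' closedBall 0 1 ∩ r⁻¹ • (Submodule.span ℤ (Set.range (Pi.basisFun ℝ ι)) : Set (ι → ℝ)) =
      (fun n : ι → ℤ => r⁻¹ • (Int.cast ∘ n : ι → ℝ)) '' latticeBall f r := by
  ext x
  simp only [Set.mem_inter_iff, Set.mem_inv_smul_set_iff₀ hr.ne', SetLike.mem_coe,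
    mem_span_basisFun_iff, Set.mem_image, latticeBall, latticePoint, Set.mem_ofPred_eq]
  constructor
  · rintro ⟨hx, n, hn⟩
    refine ⟨n, ?_, by rw [hn, inv_smul_smul₀ hr.ne']⟩
    simpa [hn, norm_smul, abs_of_pos hr] using mul_le_mul_of_nonneg_left hx hr.le
  · rintro ⟨n, hn, rfl⟩
    refine ⟨?_, n, by rw [smul_inv_smul₀ hr.ne']⟩
    simpa [norm_smul, abs_of_pos hr, inv_mul_le_iff₀ hr] using hn

theorem tendsto_ncard_latticeBall_div_pow :
    Tendsto (fun r => ((latticeBall f r).ncard : ℝ) / r ^ Fintype.card ι) atTop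
      (𝓝 (volume.real (f ⁻¹' closedBall 0 1))) := by
  have hconvex : Convex ℝ (f ⁻¹' closedBall 0 1) :=
    (convex_closedBall 0 1).linear_preimage (f : (ι → ℝ) →ₗ[ℝ] V)
  refine (tendsto_card_div_pow_atTop_volume' _ (isBounded_preimage_closedBall f 1)
    (isClosed_closedBall.preimage f.continuous).measurableSet
    (hconvex.addHaar_frontier volume) fun x y hx hxy => ?_).congr' ?_
  · rw [← preimage_closedBall_eq_smul f hx, ← preimage_closedBall_eq_smul f (hx.trans_le hxy)]
    exact Set.preimage_mono (closedBall_subset_closedBall hxy)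
  · filter_upwards [eventually_gt_atTop 0] with r hr
    rw [preimage_closedBall_inter_smul_span f hr, Nat.card_coe_set_eq,
      Set.ncard_image_of_injective (f := fun n : ι → ℤ => r⁻¹ • (Int.cast ∘ n : ι → ℝ)) _
        ((smul_right_injective _ (inv_ne_zero hr.ne')).comp
          (Int.cast_injective (α := ℝ)).comp_left)]

theorem tendsto_ncard_latticeBall_add_div_pow (c : ℝ) :
    Tendsto (fun r => ((latticeBall f (r + c)).ncard : ℝ) / r ^ Fintype.card ι) atTop
      (𝓝 (volume.real (f ⁻¹' closedBall 0 1))) := by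
  have hratio : Tendsto (fun r : ℝ => ((r + c) / r) ^ Fintype.card ι) atTop (𝓝 1) := by
    have h : Tendsto (fun r : ℝ => 1 + c / r) atTop (𝓝 (1 + 0)) :=
      tendsto_const_nhds.add (tendsto_const_nhds.div_atTop tendsto_id)
    rw [add_zero] at h
    simpa using (h.congr' ((eventually_ne_atTop 0).mono fun r hr => by
      rw [add_div, div_self hr])).pow (Fintype.card ι)
  have h := ((tendsto_ncard_latticeBall_div_pow f).comp
    (tendsto_atTop_add_const_right _ c tendsto_id)).mul hratio
  rw [mul_one] at h
  refine h.congr' ?_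
  filter_upwards [eventually_gt_atTop 0, eventually_gt_atTop (-c)] with r hr hrc
  have : r + c ≠ 0 := by linarith
  simp only [Function.comp_apply, id, div_pow]
  field_simp

lemma volume_real_preimage_closedBall_pos : 0 < volume.real (f ⁻¹' closedBall 0 1) := by
  refine ENNReal.toReal_pos (ne_of_gt ?_) (isBounded_preimage_closedBall f 1).measure_lt_top.ne
  refine lt_of_lt_of_le ?_ (measure_mono (Set.preimage_mono ball_subset_closedBall))
  exact (isOpen_ball.preimage f.continuous).measure_pos volume ⟨0, by simp⟩

end LatticeCount

section UnitCell

variable {ι V : Type*} [NormedAddCommGroup V] [NormedSpace ℝ V] (f g : (ι → ℝ) ≃L[ℝ] V)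

def unitCell : Set V :=
  {x | ∃ α : ι → ℝ, (∀ i, α i ∈ Set.Ico (0 : ℝ) 1) ∧ x = f α}

noncomputable def cellShift (y : V) : ι → ℤ := fun i => -⌊f.symm y i⌋

noncomputable def cellRep (y : V) : V := latticePoint f (cellShift f y) + y

lemma cellRep_eq (y : V) : cellRep f y = f (fun i => Int.fract (f.symm y i)) := by
  rw [cellRep]
  nth_rewrite 2 [← f.apply_symm_apply y]
  rw [latticePoint, ← map_add]
  congr 1
  ext i
  simp only [Pi.add_apply, Function.comp_apply, cellShift, Int.cast_neg, Int.fract]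
  ring

lemma cellRep_mem_unitCell (y : V) : cellRep f y ∈ unitCell f :=
  ⟨_, fun _ => ⟨Int.fract_nonneg _, Int.fract_lt_one _⟩, cellRep_eq f y⟩

lemma eq_cellShift_of_latticePoint_add_mem_unitCell {m : ι → ℤ} {y : V}
    (h : latticePoint f m + y ∈ unitCell f) : m = cellShift f y := by
  obtain ⟨α, hα, hαy⟩ := h
  have hy : f.symm y = α - Int.cast ∘ m := by
    rw [← f.symm_apply_apply α, ← hαy, latticePoint]
    simp
  ext i
  have : ⌊α i⌋ = 0 := Int.floor_eq_zero_iff.2 (hα i)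
  simp [cellShift, hy, Int.floor_sub_intCast, this]

def cutoffWavevectors (E : ℝ) : Set V :=
  {x | ∃ m n : ι → ℤ, x = latticePoint f m + latticePoint g n ∧
    ‖latticePoint f m‖ ^ 2 + ‖latticePoint g n‖ ^ 2 ≤ 2 * E}

lemma cutoffWavevectors_comm (E : ℝ) : cutoffWavevectors f g E = cutoffWavevectors g f E := by
  ext x
  constructor <;>
  · rintro ⟨m, n, rfl, h⟩
    exact ⟨n, m, add_comm _ _, by linarith⟩

def cellCutoffIndices (E : ℝ) : Set (ι → ℤ) :=
  {n | ‖latticePoint f (cellShift f (latticePoint g n))‖ ^ 2 + ‖latticePoint g n‖ ^ 2 ≤ 2 * E}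

lemma cutoffWavevectors_inter_unitCell (E : ℝ) :
    cutoffWavevectors f g E ∩ unitCell f =
      (cellRep f ∘ latticePoint g) '' cellCutoffIndices f g E := by
  ext x
  constructor
  · rintro ⟨⟨m, n, rfl, h⟩, hcell⟩
    obtain rfl := eq_cellShift_of_latticePoint_add_mem_unitCell f hcell
    exact ⟨n, h, rfl⟩
  · rintro ⟨n, h, rfl⟩
    exact ⟨⟨_, n, rfl, h⟩, cellRep_mem_unitCell f _⟩

lemma injective_cellRep_comp_latticePoint
    (hfg : ∀ m n, latticePoint f m = latticePoint g n → latticePoint g n = 0) :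
    Function.Injective (cellRep f ∘ latticePoint g) := by
  intro n n' h
  simp only [Function.comp_apply, cellRep] at h
  have hdiff : latticePoint f (cellShift f (latticePoint g n) - cellShift f (latticePoint g n')) =
      latticePoint g (n' - n) := by
    rw [latticePoint_sub, latticePoint_sub]
    linear_combination (norm := abel) h
  have h0 := hfg _ _ hdiff
  rw [latticePoint_sub, sub_eq_zero] at h0
  exact (latticePoint_injective g h0).symm

variable [Fintype ι]

lemma norm_cellRep_le (y : V) : ‖cellRep f y‖ ≤ ‖(f : (ι → ℝ) →L[ℝ] V)‖ := by
  rw [cellRep_eq]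
  refine ((f : (ι → ℝ) →L[ℝ] V).le_opNorm _).trans (mul_le_of_le_one_right (norm_nonneg _) ?_)
  refine (pi_norm_le_iff_of_nonneg zero_le_one).2 fun i => ?_
  rw [Real.norm_of_nonneg (Int.fract_nonneg _)]
  exact (Int.fract_lt_one _).le

lemma cutoffWavevectors_finite (E : ℝ) : (cutoffWavevectors f g E).Finite := by
  refine (((latticeBall_finite f √(2 * E)).prod (latticeBall_finite g √(2 * E))).image
    fun p => latticePoint f p.1 + latticePoint g p.2).subset ?_
  have norm_le_sqrt {x : V} (h : ‖x‖ ^ 2 ≤ 2 * E) : ‖x‖ ≤ √(2 * E) :=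
    (le_abs_self _).trans (Real.abs_le_sqrt h)
  rintro x ⟨m, n, rfl, h⟩
  exact ⟨(m, n), ⟨norm_le_sqrt (by nlinarith [sq_nonneg ‖latticePoint g n‖]),
    norm_le_sqrt (by nlinarith [sq_nonneg ‖latticePoint f m‖])⟩, rfl⟩

lemma latticeBall_subset_cellCutoffIndices {E : ℝ} (hE : 0 ≤ E) :
    latticeBall g (√E - ‖(f : (ι → ℝ) →L[ℝ] V)‖) ⊆ cellCutoffIndices f g E := by
  intro n (hn : ‖latticePoint g n‖ ≤ _)
  set y := latticePoint g n
  set x := latticePoint f (cellShift f y)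
  have hx : ‖x‖ ≤ √E := calc
    ‖x‖ = ‖cellRep f y - y‖ := by rw [cellRep, add_sub_cancel_right]
    _ ≤ ‖cellRep f y‖ + ‖y‖ := norm_sub_le _ _
    _ ≤ √E := by linarith [norm_cellRep_le f y]
  have hy : ‖y‖ ≤ √E := hn.trans (sub_le_self _ (norm_nonneg _))
  show ‖x‖ ^ 2 + ‖y‖ ^ 2 ≤ 2 * E
  linarith [pow_le_pow_left₀ (norm_nonneg x) hx 2, pow_le_pow_left₀ (norm_nonneg y) hy 2,
    Real.sq_sqrt hE]

lemma cellCutoffIndices_subset_latticeBall (E : ℝ) :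
    cellCutoffIndices f g E ⊆ latticeBall g (√E + ‖(f : (ι → ℝ) →L[ℝ] V)‖) := by
  intro n (hn : _ ≤ 2 * E)
  set y := latticePoint g n
  set x := latticePoint f (cellShift f y)
  set C := ‖(f : (ι → ℝ) →L[ℝ] V)‖
  have hyx : ‖y‖ - C ≤ ‖x‖ := by
    have := calc
      ‖y‖ = ‖cellRep f y - x‖ := by rw [cellRep, add_sub_cancel_left]
      _ ≤ ‖cellRep f y‖ + ‖x‖ := norm_sub_le _ _
    linarith [norm_cellRep_le f y]
  show ‖y‖ ≤ √E + C
  rcases le_or_gt ‖y‖ C with h | h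
  · linarith [Real.sqrt_nonneg E]
  · have hyC : ‖y‖ - C ≤ ‖y‖ := sub_le_self _ (norm_nonneg _)
    have : (‖y‖ - C) ^ 2 ≤ E := by
      linarith [pow_le_pow_left₀ (sub_nonneg.2 h.le) hyx 2,
        pow_le_pow_left₀ (sub_nonneg.2 h.le) hyC 2]
    linarith [(le_abs_self _).trans (Real.abs_le_sqrt this)]

theorem tendsto_ncard_cutoffWavevectors_inter_unitCell_div_pow
    (hfg : ∀ m n, latticePoint f m = latticePoint g n → latticePoint g n = 0) :
    Tendsto (fun E => ((cutoffWavevectors f g E ∩ unitCell f).ncard : ℝ) / √E ^ Fintype.card ι)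
      atTop (𝓝 (volume.real (g ⁻¹' closedBall 0 1))) := by
  set C := ‖(f : (ι → ℝ) →L[ℝ] V)‖
  have hcount (E : ℝ) :
      (cutoffWavevectors f g E ∩ unitCell f).ncard = (cellCutoffIndices f g E).ncard := by
    rw [cutoffWavevectors_inter_unitCell,
      Set.ncard_image_of_injective _ (injective_cellRep_comp_latticePoint f g hfg)]
  refine tendsto_of_tendsto_of_tendsto_of_le_of_le'
    ((tendsto_ncard_latticeBall_add_div_pow g (-C)).comp Real.tendsto_sqrt_atTop)
    ((tendsto_ncard_latticeBall_add_div_pow g C).comp Real.tendsto_sqrt_atTop) ?_ ?_ <;>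
    filter_upwards [eventually_ge_atTop 0] with E hE <;>
    rw [Function.comp_apply, hcount] <;>
    refine div_le_div_of_nonneg_right (Nat.cast_le.2 (Set.ncard_le_ncard ?_ ?_)) (by positivity)
  · exact sub_eq_add_neg (√E) C ▸ latticeBall_subset_cellCutoffIndices f g hE
  · exact (latticeBall_finite g _).subset (cellCutoffIndices_subset_latticeBall f g E)
  · exact cellCutoffIndices_subset_latticeBall f g E
  · exact latticeBall_finite g _

end UnitCell

section ReciprocalLattice

variable {d : ℕ}

lemma Gvec_add (A : Matrix (Fin d) (Fin d) ℝ) (m n : Fin d → ℤ) :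
    Gvec A (m + n) = Gvec A m + Gvec A n := by
  simp only [Gvec, ← smul_add, ← Matrix.mulVec_add]
  congr 2
  ext i
  simp

lemma image_add_recLat {A : Matrix (Fin d) (Fin d) ℝ} {τ : Fin d → ℝ} (hτ : τ ∈ recLat A) :
    (· + τ) '' recLat A = recLat A := by
  obtain ⟨k, rfl⟩ := hτ
  ext x
  constructor
  · rintro ⟨_, ⟨p, rfl⟩, rfl⟩
    exact ⟨p + k, (Gvec_add A p k).symm⟩
  · rintro ⟨p, rfl⟩
    exact ⟨Gvec A (p - k), ⟨p - k, rfl⟩, show Gvec A (p - k) + Gvec A k = Gvec A p by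
      rw [← Gvec_add, sub_add_cancel]⟩

lemma Incommensurate.eq_zero_of_mem_recLat {A₁ A₂ : Matrix (Fin d) (Fin d) ℝ}
    (hinc : Incommensurate A₁ A₂) {τ : Fin d → ℝ} (h₁ : τ ∈ recLat A₁) (h₂ : τ ∈ recLat A₂) :
    τ = 0 :=
  hinc τ (by rw [Set.image_union, image_add_recLat h₁, image_add_recLat h₂])

noncomputable def reciprocalMap (A : Matrix (Fin d) (Fin d) ℝ) : (Fin d → ℝ) →ₗ[ℝ] Fin d → ℝ :=
  (2 * Real.pi) • Matrix.toLin' (A⁻¹).transpose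

lemma det_reciprocalMap (A : Matrix (Fin d) (Fin d) ℝ) :
    LinearMap.det (reciprocalMap A) = (2 * Real.pi) ^ d * A.det⁻¹ := by
  rw [reciprocalMap, LinearMap.det_smul, LinearMap.det_toLin', Matrix.det_transpose,
    Matrix.det_nonsing_inv, Ring.inverse_eq_inv', Module.finrank_fin_fun]

lemma det_reciprocalMap_ne_zero {A : Matrix (Fin d) (Fin d) ℝ} (hA : IsUnit A.det) :
    LinearMap.det (reciprocalMap A) ≠ 0 := by
  have := hA.ne_zero
  rw [det_reciprocalMap]
  positivity

/-- `α ↦ 2π A⁻ᵀ α`, valued in `EuclideanSpace` so that its norm is the one `sqNorm` measures. -/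
noncomputable def reciprocalEquiv (A : Matrix (Fin d) (Fin d) ℝ) (hA : IsUnit A.det) :
    (Fin d → ℝ) ≃L[ℝ] EuclideanSpace ℝ (Fin d) :=
  (((reciprocalMap A).equivOfDetNeZero (det_reciprocalMap_ne_zero hA)).trans
    (WithLp.linearEquiv 2 ℝ (Fin d → ℝ)).symm).toContinuousLinearEquiv

variable {A A₁ A₂ : Matrix (Fin d) (Fin d) ℝ}

lemma latticePoint_reciprocalEquiv (hA : IsUnit A.det) (m : Fin d → ℤ) :
    latticePoint (reciprocalEquiv A hA) m = toLp 2 (Gvec A m) :=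
  rfl

lemma sqNorm_eq_norm_toLp_sq (v : Fin d → ℝ) : sqNorm v = ‖toLp 2 v‖ ^ 2 := by
  rw [EuclideanSpace.real_norm_sq_eq]
  rfl

lemma recUnitCell_eq_preimage (hA : IsUnit A.det) :
    recUnitCell A = toLp 2 ⁻¹' unitCell (reciprocalEquiv A hA) := by
  ext x
  simp only [recUnitCell, unitCell, Set.mem_preimage, Set.mem_ofPred_eq,
    (toLp_injective 2).eq_iff]
  rfl

lemma cutoffSet_eq_preimage (h₁ : IsUnit A₁.det) (h₂ : IsUnit A₂.det) (E : ℝ) :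
    cutoffSet A₁ A₂ E =
      toLp 2 ⁻¹' cutoffWavevectors (reciprocalEquiv A₁ h₁) (reciprocalEquiv A₂ h₂) E := by
  ext x
  simp only [cutoffSet, cutoffWavevectors, Set.mem_preimage, Set.mem_ofPred_eq,
    latticePoint_reciprocalEquiv, sqNorm_eq_norm_toLp_sq, ← toLp_add, (toLp_injective 2).eq_iff]

lemma ncard_preimage_toLp (s : Set (EuclideanSpace ℝ (Fin d))) : (toLp 2 ⁻¹' s).ncard = s.ncard :=
  Set.ncard_preimage_of_injective_subset_range (toLp_injective 2)
    (by rw [(toLp_surjective 2).range_eq]; exact Set.subset_univ s)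

lemma latticePoint_reciprocalEquiv_eq_zero (h₁ : IsUnit A₁.det) (h₂ : IsUnit A₂.det)
    (h : ∀ τ, τ ∈ recLat A₁ → τ ∈ recLat A₂ → τ = 0) (m n : Fin d → ℤ)
    (hmn : latticePoint (reciprocalEquiv A₁ h₁) m = latticePoint (reciprocalEquiv A₂ h₂) n) :
    latticePoint (reciprocalEquiv A₂ h₂) n = 0 := by
  simp only [latticePoint_reciprocalEquiv] at hmn ⊢
  rw [h _ ⟨m, toLp_injective 2 hmn.symm⟩ ⟨n, rfl⟩, toLp_zero]

lemma volume_real_preimage_closedBall_reciprocalEquiv (hA : IsUnit A.det) :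
    volume.real (reciprocalEquiv A hA ⁻¹' closedBall 0 1) =
      |A.det| / (2 * Real.pi) ^ d *
        volume.real (toLp 2 ⁻¹' closedBall (0 : EuclideanSpace ℝ (Fin d)) 1) := by
  have hpre : reciprocalEquiv A hA ⁻¹' closedBall 0 1 =
      reciprocalMap A ⁻¹' (toLp 2 ⁻¹' closedBall (0 : EuclideanSpace ℝ (Fin d)) 1) := rfl
  rw [hpre, measureReal_def, Measure.addHaar_preimage_linearMap _ (det_reciprocalMap_ne_zero hA),
    ENNReal.toReal_mul, ENNReal.toReal_ofReal (abs_nonneg _), det_reciprocalMap, measureReal_def,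
    mul_inv, inv_inv, abs_mul, abs_inv, abs_of_pos (by positivity : (0 : ℝ) < (2 * Real.pi) ^ d),
    div_eq_mul_inv, mul_comm |A.det|]

end ReciprocalLattice

/-- the cutoff wavevector set is finite, and the ratio of the numbers of its
elements lying in the two reciprocal unit cells tends to
`|Γ₁*|/|Γ₂*| = |Γ₂|/|Γ₁| = |det A₂|/|det A₁|` as the cutoff goes to infinity. -/
theorem cutoff_counting_ratio {d : ℕ}
    (A₁ A₂ : Matrix (Fin d) (Fin d) ℝ) (h₁ : IsUnit A₁.det) (h₂ : IsUnit A₂.det)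
    (hinc : Incommensurate A₁ A₂) :
    (∀ E : ℝ, 0 < E → (cutoffSet A₁ A₂ E).Finite) ∧
    Tendsto
      (fun E : ℝ =>
        ((cutoffSet A₁ A₂ E ∩ recUnitCell A₁).ncard : ℝ)
          / ((cutoffSet A₁ A₂ E ∩ recUnitCell A₂).ncard : ℝ))
      atTop (nhds (|A₂.det| / |A₁.det|)) := by
  set f₁ := reciprocalEquiv A₁ h₁
  set f₂ := reciprocalEquiv A₂ h₂
  have hN₁ (E : ℝ) : (cutoffSet A₁ A₂ E ∩ recUnitCell A₁).ncard =
      (cutoffWavevectors f₁ f₂ E ∩ unitCell f₁).ncard := by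
    rw [cutoffSet_eq_preimage h₁ h₂, recUnitCell_eq_preimage h₁, ← Set.preimage_inter,
      ncard_preimage_toLp]
  have hN₂ (E : ℝ) : (cutoffSet A₁ A₂ E ∩ recUnitCell A₂).ncard =
      (cutoffWavevectors f₂ f₁ E ∩ unitCell f₂).ncard := by
    rw [cutoffSet_eq_preimage h₁ h₂, recUnitCell_eq_preimage h₂, ← Set.preimage_inter,
      ncard_preimage_toLp, cutoffWavevectors_comm]
  refine ⟨fun E _ => ?_, ?_⟩
  · rw [cutoffSet_eq_preimage h₁ h₂]
    exact (cutoffWavevectors_finite f₁ f₂ E).preimage (toLp_injective 2).injOn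
  have lim₁ := tendsto_ncard_cutoffWavevectors_inter_unitCell_div_pow f₁ f₂
    (latticePoint_reciprocalEquiv_eq_zero h₁ h₂ fun _ => hinc.eq_zero_of_mem_recLat)
  have lim₂ := tendsto_ncard_cutoffWavevectors_inter_unitCell_div_pow f₂ f₁
    (latticePoint_reciprocalEquiv_eq_zero h₂ h₁ fun _ h h' => hinc.eq_zero_of_mem_recLat h' h)
  have hv₁ := volume_real_preimage_closedBall_pos f₁
  have hlim := lim₁.div lim₂ hv₁.ne'
  rw [volume_real_preimage_closedBall_reciprocalEquiv] at hv₁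
  rw [volume_real_preimage_closedBall_reciprocalEquiv,
    volume_real_preimage_closedBall_reciprocalEquiv] at hlim
  have hball := pos_of_mul_pos_right hv₁ (by positivity)
  convert hlim.congr' ((eventually_gt_atTop 0).mono fun E hE => ?_) using 2
  · have := h₁.ne_zero
    field_simp
  · rw [Pi.div_apply, hN₁, hN₂, div_div_div_cancel_right₀ (by positivity)]
end
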